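/- Let d ≥ 1, c > 0 and R > 0. Then there exists N ∈ ℕ such that for every θ ∈ ℝᵈ the set Γ̃_θ := {(γ, |γ|²) ∈ ℝ^{d+1} : γ ∈ θ/(2π) + ℤᵈ} can be decomposed as Γ̃_θ = ⋃_{j=1}^N Γ̃_{θ,j} with 2·(c/δ₁ + ⋯ + c/δ_N) ≤ R, where δ_j := gap(Γ̃_{θ,j}). In particular, N can be chosen uniformly in θ. -/

import Mathlib

open MeasureTheory ENNReal

/-- The gap of a set `X`: the infimum of distances between distinct points of `X`
(`∞` if `X` has at most one element). -/
noncomputable def setGap {n : ℕ} (X : Set (EuclideanSpace ℝ (Fin n))) : ℝ≥0∞ :=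
  ⨅ (x : X) (y : X) (_ : x ≠ y), edist (x : EuclideanSpace ℝ (Fin n)) y

/-- The point `(γ, |γ|²) ∈ ℝ^{d+1}` over `γ ∈ ℝᵈ`. -/
noncomputable def parabPoint (d : ℕ) (γ : Fin d → ℝ) : EuclideanSpace ℝ (Fin (d + 1)) :=
  (WithLp.equiv 2 (Fin (d + 1) → ℝ)).symm (Fin.snoc γ (∑ i, γ i ^ 2))

/-- The graph `Γ̃_θ = {(γ, |γ|²) : γ ∈ θ/(2π) + ℤᵈ} ⊆ ℝ^{d+1}` of the squared norm
over the shifted lattice `θ/(2π) + ℤᵈ`. -/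
noncomputable def tildeGamma (d : ℕ) (θ : Fin d → ℝ) : Set (EuclideanSpace ℝ (Fin (d + 1))) :=
  {p | ∃ k : Fin d → ℤ, p = parabPoint d fun i => θ i / (2 * Real.pi) + (k i : ℝ)}

/-!
Induct on the dimension `k` of a subspace `V` containing all differences of a set
`A ⊆ x₀ + ℤᵈ`, with a number of pieces depending only on `k` and `ε`. Fix `G` with `1/G < ε/2`.
The points of `A` whose lift is at distance `> G` from every other lift form one piece of gap
`≥ G`. Every other point `x` has a neighbour `x + u ∈ A` with `u ∈ ℤᵈ ∩ V`, `0 < ‖u‖∞ ≤ G` and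
height jump `|x + u|² - |x|² = 2 x·u + |u|² ∈ [-G, G]`. For fixed `u` this jump varies by integers
along `A`, so fixing its integer part fixes `x·u`: each of the finitely many slices has its
differences in `V ∩ u^⊥`, which has smaller dimension because `u ∈ V`.
-/

variable {n : ℕ}

theorem setGap_eq_top_of_subsingleton {S : Set (EuclideanSpace ℝ (Fin n))} (hS : S.Subsingleton) :
    setGap S = ⊤ :=
  eq_top_iff.2 <| le_iInf fun p => le_iInf fun q => le_iInf fun hpq =>
    absurd (Subtype.ext (hS p.2 q.2)) hpq

theorem le_setGap {S : Set (EuclideanSpace ℝ (Fin n))} {r : ℝ≥0∞}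
    (h : ∀ p ∈ S, ∀ q ∈ S, p ≠ q → r ≤ edist p q) : r ≤ setGap S :=
  le_iInf fun p => le_iInf fun q => le_iInf fun hpq =>
    h p p.2 q q.2 fun h' => hpq (Subtype.ext h')

def HasGapSplitting (S : Set (EuclideanSpace ℝ (Fin n))) (ι : Type*) [Fintype ι]
    (ε : ℝ≥0∞) : Prop :=
  ∃ Γ : ι → Set (EuclideanSpace ℝ (Fin n)), ⋃ i, Γ i = S ∧ ∑ i, (setGap (Γ i))⁻¹ ≤ ε

namespace HasGapSplitting

variable {S T : Set (EuclideanSpace ℝ (Fin n))} {ι κ : Type*} [Fintype ι] [Fintype κ]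
  {ε δ : ℝ≥0∞}

theorem self (S : Set (EuclideanSpace ℝ (Fin n))) : HasGapSplitting S Unit (setGap S)⁻¹ :=
  ⟨fun _ => S, Set.iUnion_const S, by simp⟩

theorem empty (ι : Type*) [Fintype ι] :
    HasGapSplitting (∅ : Set (EuclideanSpace ℝ (Fin n))) ι 0 :=
  ⟨fun _ => ∅, Set.iUnion_empty, by
    simp [setGap_eq_top_of_subsingleton Set.subsingleton_empty]⟩

theorem mono (h : HasGapSplitting S ι ε) (hεδ : ε ≤ δ) : HasGapSplitting S ι δ :=
  let ⟨Γ, hΓ, hsum⟩ := h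
  ⟨Γ, hΓ, hsum.trans hεδ⟩

theorem equiv (h : HasGapSplitting S ι ε) (e : ι ≃ κ) : HasGapSplitting S κ ε :=
  let ⟨Γ, hΓ, hsum⟩ := h
  ⟨fun k => Γ (e.symm k), by rw [e.symm.surjective.iUnion_comp Γ, hΓ], by
    rwa [e.symm.sum_comp fun i => (setGap (Γ i))⁻¹]⟩

theorem union (hS : HasGapSplitting S ι ε) (hT : HasGapSplitting T κ δ) :
    HasGapSplitting (S ∪ T) (ι ⊕ κ) (ε + δ) :=
  let ⟨Γ, hΓ, hΓsum⟩ := hS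
  let ⟨Δ, hΔ, hΔsum⟩ := hT
  ⟨Sum.elim Γ Δ, by simp only [Set.iUnion_sum, Sum.elim_inl, Sum.elim_inr, hΓ, hΔ], by
    rw [Fintype.sum_sum_type]
    exact add_le_add hΓsum hΔsum⟩

theorem iUnion {J : Type*} [Fintype J] {S : J → Set (EuclideanSpace ℝ (Fin n))}
    (h : ∀ j, HasGapSplitting (S j) ι ε) :
    HasGapSplitting (⋃ j, S j) (J × ι) (Fintype.card J * ε) := by
  choose Γ hΓ hsum using h
  refine ⟨fun p => Γ p.1 p.2, by simp only [Set.iUnion_prod', hΓ], ?_⟩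
  rw [Fintype.sum_prod_type]
  calc ∑ j, ∑ i, (setGap (Γ j i))⁻¹ ≤ ∑ _j : J, ε := Finset.sum_le_sum fun j _ => hsum j
    _ = Fintype.card J * ε := by simp

end HasGapSplitting

section Parabola

variable {d : ℕ}

theorem parabPoint_castSucc (x : Fin d → ℝ) (i : Fin d) :
    parabPoint d x (Fin.castSucc i) = x i := by
  simp [parabPoint]

theorem parabPoint_last (x : Fin d → ℝ) : parabPoint d x (Fin.last d) = x ⬝ᵥ x := by
  simp [parabPoint, dotProduct, sq]

theorem abs_sub_le_dist_parabPoint (x y : Fin d → ℝ) (i : Fin d) :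
    |x i - y i| ≤ dist (parabPoint d x) (parabPoint d y) := by
  simpa [Real.dist_eq, parabPoint_castSucc] using
    PiLp.dist_apply_le (parabPoint d x) (parabPoint d y) (Fin.castSucc i)

theorem abs_dotProduct_self_sub_le_dist_parabPoint (x y : Fin d → ℝ) :
    |x ⬝ᵥ x - y ⬝ᵥ y| ≤ dist (parabPoint d x) (parabPoint d y) := by
  simpa [Real.dist_eq, parabPoint_last] using
    PiLp.dist_apply_le (parabPoint d x) (parabPoint d y) (Fin.last d)

def isolatedPart (A : Set (Fin d → ℝ)) (G : ℕ) : Set (Fin d → ℝ) :=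
  {x ∈ A | ∀ y ∈ A, y ≠ x → (G : ℝ) < dist (parabPoint d x) (parabPoint d y)}

theorem natCast_le_setGap_image_isolatedPart (A : Set (Fin d → ℝ)) (G : ℕ) :
    (G : ℝ≥0∞) ≤ setGap (parabPoint d '' isolatedPart A G) := by
  refine le_setGap ?_
  rintro _ ⟨x, hx, rfl⟩ _ ⟨y, hy, rfl⟩ hxy
  rw [edist_dist, ← ENNReal.ofReal_natCast]
  exact ENNReal.ofReal_le_ofReal (hx.2 y hy.1 fun h => hxy (h ▸ rfl)).le

def heightSlice (A : Set (Fin d → ℝ)) (n : Fin d → ℤ) (m : ℤ) : Set (Fin d → ℝ) :=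
  {x ∈ A | x + Int.cast ∘ n ∈ A ∧
    ⌊(x + Int.cast ∘ n) ⬝ᵥ (x + Int.cast ∘ n) - x ⬝ᵥ x⌋ = m}

theorem eq_of_floor_eq_of_sub_eq_intCast {a b : ℝ} {k : ℤ} (h : ⌊a⌋ = ⌊b⌋) (hk : a - b = k) :
    a = b := by
  rw [sub_eq_iff_eq_add'] at hk
  rw [hk, Int.floor_add_intCast] at h
  simp_all

theorem sub_dotProduct_eq_zero_of_mem_heightSlice {A : Set (Fin d → ℝ)}
    (hAZ : ∀ x ∈ A, ∀ y ∈ A, ∃ k : Fin d → ℤ, x - y = Int.cast ∘ k) {n : Fin d → ℤ} {m : ℤ}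
    {x y : Fin d → ℝ} (hx : x ∈ heightSlice A n m) (hy : y ∈ heightSlice A n m) :
    (x - y) ⬝ᵥ Int.cast ∘ n = 0 := by
  obtain ⟨k, hk⟩ := hAZ x hx.1 y hy.1
  set u : Fin d → ℝ := Int.cast ∘ n
  have hjump : ∀ z : Fin d → ℝ, (z + u) ⬝ᵥ (z + u) - z ⬝ᵥ z = 2 * (z ⬝ᵥ u) + u ⬝ᵥ u := by
    intro z
    simp only [add_dotProduct, dotProduct_add, dotProduct_comm u z]
    ring
  have hint : (x + u) ⬝ᵥ (x + u) - x ⬝ᵥ x - ((y + u) ⬝ᵥ (y + u) - y ⬝ᵥ y)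
      = ((2 * (k ⬝ᵥ n) : ℤ) : ℝ) := by
    have hcast : ((k ⬝ᵥ n : ℤ) : ℝ) = (Int.cast ∘ k) ⬝ᵥ u :=
      RingHom.map_dotProduct (Int.castRingHom ℝ) k n
    rw [hjump, hjump, Int.cast_mul, hcast, ← hk, sub_dotProduct]
    push_cast
    ring
  have := eq_of_floor_eq_of_sub_eq_intCast (hx.2.2.trans hy.2.2.symm) hint
  rw [hjump, hjump] at this
  rw [sub_dotProduct]
  linarith

noncomputable def sliceIndex (d G : ℕ) : Finset ((Fin d → ℤ) × ℤ) :=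
  ((Fintype.piFinset fun _ : Fin d => Finset.Icc (-(G : ℤ)) G).erase 0) ×ˢ
    Finset.Icc (-(G : ℤ)) G

theorem subset_isolatedPart_union_heightSlice {A : Set (Fin d → ℝ)}
    (hAZ : ∀ x ∈ A, ∀ y ∈ A, ∃ k : Fin d → ℤ, x - y = Int.cast ∘ k) (G : ℕ) :
    A ⊆ isolatedPart A G ∪ ⋃ p : sliceIndex d G, heightSlice A p.1.1 p.1.2 := by
  intro x hx
  by_cases hgood : x ∈ isolatedPart A G
  · exact Or.inl hgood
  obtain ⟨y, hy, hyx, hdist⟩ : ∃ y ∈ A, y ≠ x ∧ dist (parabPoint d y) (parabPoint d x) ≤ G := by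
    simpa [isolatedPart, hx, dist_comm] using hgood
  obtain ⟨n, hn⟩ := hAZ y hy x hx
  have hxn : x + Int.cast ∘ n = y := by rw [← hn]; abel
  have hn0 : n ≠ 0 := by
    rintro rfl
    exact hyx (by simpa [sub_eq_zero] using hn)
  have hcoord : ∀ i, |n i| ≤ G := fun i => by
    have := (abs_sub_le_dist_parabPoint y x i).trans hdist
    rw [← hxn, Pi.add_apply, add_sub_cancel_left, Function.comp_apply] at this
    exact_mod_cast this
  have hheight := (abs_dotProduct_self_sub_le_dist_parabPoint y x).trans hdist
  refine Or.inr (Set.mem_iUnion.2 ⟨⟨(n, ⌊y ⬝ᵥ y - x ⬝ᵥ x⌋), ?_⟩, hx, hxn ▸ hy, by rw [hxn]⟩)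
  simp only [sliceIndex, Finset.mem_product, Finset.mem_erase, Fintype.mem_piFinset,
    Finset.mem_Icc]
  refine ⟨⟨hn0, fun i => ?_⟩, ?_, ?_⟩
  · exact abs_le.1 (hcoord i)
  · exact Int.le_floor.2 (by push_cast; linarith [(abs_le.1 hheight).1])
  · exact_mod_cast (Int.floor_le _).trans (abs_le.1 hheight).2

open Module

theorem finrank_inf_ker_dotProductBilin_lt {K m : Type*} [Field K] [LinearOrder K]
    [IsStrictOrderedRing K] [Fintype m] {V : Submodule K (m → K)} {u : m → K} (hu : u ∈ V)
    (hu0 : u ≠ 0) : finrank K ↥(V ⊓ LinearMap.ker (dotProductBilin K K u)) < finrank K V := by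
  refine Submodule.finrank_lt_finrank_of_lt (inf_le_left.lt_of_ne fun h => hu0 ?_)
  have hker : u ∈ V ⊓ LinearMap.ker (dotProductBilin K K u) := by rwa [h]
  exact dotProduct_self_eq_zero.1 (Submodule.mem_inf.1 hker).2

def UniformGapSplitting (d k : ℕ) (ι : Type*) [Fintype ι] (ε : ℝ≥0∞) : Prop :=
  ∀ V : Submodule ℝ (Fin d → ℝ), finrank ℝ V ≤ k → ∀ A : Set (Fin d → ℝ),
    (∀ x ∈ A, ∀ y ∈ A, x - y ∈ V) →
    (∀ x ∈ A, ∀ y ∈ A, ∃ n : Fin d → ℤ, x - y = Int.cast ∘ n) →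
    HasGapSplitting (parabPoint d '' A) ι ε

namespace UniformGapSplitting

variable {k : ℕ} {ι : Type*} [Fintype ι] {ε δ : ℝ≥0∞}

theorem zero (d : ℕ) (ε : ℝ≥0∞) : UniformGapSplitting d 0 Unit ε := by
  intro V hV A hAV _
  have hA : A.Subsingleton := fun x hx y hy => sub_eq_zero.1 <| by
    simpa [Submodule.finrank_eq_zero.1 (Nat.le_zero.1 hV)] using (hAV x hx y hy : x - y ∈ V)
  refine (HasGapSplitting.self _).mono ?_
  rw [setGap_eq_top_of_subsingleton (hA.image _), ENNReal.inv_top]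
  exact zero_le

theorem mono (h : UniformGapSplitting d k ι ε) (hεδ : ε ≤ δ) : UniformGapSplitting d k ι δ :=
  fun V hV A hAV hAZ => (h V hV A hAV hAZ).mono hεδ

theorem hasGapSplitting_heightSlice (h : UniformGapSplitting d k ι ε)
    {V : Submodule ℝ (Fin d → ℝ)} (hV : finrank ℝ V ≤ k + 1) {A : Set (Fin d → ℝ)}
    (hAV : ∀ x ∈ A, ∀ y ∈ A, x - y ∈ V)
    (hAZ : ∀ x ∈ A, ∀ y ∈ A, ∃ n : Fin d → ℤ, x - y = Int.cast ∘ n) {n : Fin d → ℤ}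
    (hn : n ≠ 0) (m : ℤ) : HasGapSplitting (parabPoint d '' heightSlice A n m) ι ε := by
  rcases (heightSlice A n m).eq_empty_or_nonempty with hempty | ⟨x, hx⟩
  · rw [hempty, Set.image_empty]
    exact (HasGapSplitting.empty ι).mono zero_le
  have hu : Int.cast ∘ n ∈ V := by simpa using hAV _ hx.2.1 x hx.1
  have hu0 : (Int.cast ∘ n : Fin d → ℝ) ≠ 0 := fun h0 =>
    hn (funext fun i => by simpa using congrFun h0 i)
  refine h _ (Nat.lt_succ_iff.1 ((finrank_inf_ker_dotProductBilin_lt hu hu0).trans_le hV)) _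
    (fun y hy z hz => ⟨hAV y hy.1 z hz.1, ?_⟩) (fun y hy z hz => hAZ y hy.1 z hz.1)
  rw [SetLike.mem_coe, LinearMap.mem_ker, dotProductBilin_apply_apply, dotProduct_comm]
  exact sub_dotProduct_eq_zero_of_mem_heightSlice hAZ hy hz

theorem succ (h : UniformGapSplitting d k ι ε) (G : ℕ) :
    UniformGapSplitting d (k + 1) (Unit ⊕ sliceIndex d G × ι)
      ((G : ℝ≥0∞)⁻¹ + (sliceIndex d G).card * ε) := by
  intro V hV A hAV hAZ
  have hcover : parabPoint d '' A = parabPoint d '' isolatedPart A G ∪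
      ⋃ p : sliceIndex d G, parabPoint d '' heightSlice A p.1.1 p.1.2 := by
    rw [← Set.image_iUnion, ← Set.image_union]
    refine congrArg _ (subset_antisymm (subset_isolatedPart_union_heightSlice hAZ G) ?_)
    exact Set.union_subset (fun x hx => hx.1) (Set.iUnion_subset fun p x hx => hx.1)
  rw [hcover, ← Fintype.card_coe]
  refine ((HasGapSplitting.self _).mono ?_).union (HasGapSplitting.iUnion fun p => ?_)
  · exact ENNReal.inv_le_inv.2 (natCast_le_setGap_image_isolatedPart A G)
  · exact h.hasGapSplitting_heightSlice hV hAV hAZ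
      (Finset.mem_erase.1 (Finset.mem_product.1 p.2).1).1 _

end UniformGapSplitting

theorem exists_uniformGapSplitting (d k : ℕ) {ε : ℝ≥0∞} (hε : ε ≠ 0) :
    ∃ (ι : Type) (_ : Fintype ι), UniformGapSplitting d k ι ε := by
  induction k generalizing ε with
  | zero => exact ⟨Unit, inferInstance, UniformGapSplitting.zero d ε⟩
  | succ k ih =>
    obtain ⟨G, hG⟩ := ENNReal.exists_inv_nat_lt (ENNReal.half_pos hε).ne'
    set c := (sliceIndex d G).card
    obtain ⟨ι, _, hι⟩ := ih (ε := ε / 2 / c)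
      (ENNReal.div_pos_iff.2 ⟨(ENNReal.half_pos hε).ne', ENNReal.natCast_ne_top c⟩).ne'
    refine ⟨_, inferInstance, (hι.succ G).mono ?_⟩
    calc (G : ℝ≥0∞)⁻¹ + c * (ε / 2 / c) ≤ ε / 2 + ε / 2 := add_le_add hG.le ENNReal.mul_div_le
      _ = ε := ENNReal.add_halves ε

end Parabola

theorem stmt10_general (d : ℕ) (c R : ℝ) (hc : 0 < c) (hR : 0 < R) :
    ∃ N : ℕ, ∀ θ : Fin d → ℝ,
      ∃ Γ : Fin N → Set (EuclideanSpace ℝ (Fin (d + 1))),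
        (⋃ j, Γ j) = tildeGamma d θ ∧
        2 * ∑ j, ENNReal.ofReal c / setGap (Γ j) ≤ ENNReal.ofReal R := by
  obtain ⟨ι, _, hι⟩ := exists_uniformGapSplitting d d (ε := ENNReal.ofReal (R / (2 * c)))
    (by simp only [ne_eq, ENNReal.ofReal_eq_zero, not_le]; positivity)
  refine ⟨Fintype.card ι, fun θ => ?_⟩
  set A := Set.range fun k : Fin d → ℤ => fun i => θ i / (2 * Real.pi) + k i
  have hAZ : ∀ x ∈ A, ∀ y ∈ A, ∃ n : Fin d → ℤ, x - y = Int.cast ∘ n := by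
    rintro _ ⟨k, rfl⟩ _ ⟨l, rfl⟩
    exact ⟨k - l, funext fun i => by simp⟩
  have hA : parabPoint d '' A = tildeGamma d θ := by
    ext p
    simp [A, tildeGamma, eq_comm]
  obtain ⟨Γ, hΓ, hsum⟩ := (hι ⊤ ((finrank_top ℝ _).trans_le (Module.finrank_fin_fun ℝ).le) A
    (fun _ _ _ _ => Submodule.mem_top) hAZ).equiv (Fintype.equivFin ι)
  refine ⟨Γ, hΓ.trans hA, ?_⟩
  calc 2 * ∑ j, ENNReal.ofReal c / setGap (Γ j)
      = 2 * ENNReal.ofReal c * ∑ j, (setGap (Γ j))⁻¹ := by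
        simp only [div_eq_mul_inv, Finset.mul_sum, mul_assoc]
    _ ≤ 2 * ENNReal.ofReal c * ENNReal.ofReal (R / (2 * c)) := by gcongr
    _ = ENNReal.ofReal R := by
        rw [← ENNReal.ofReal_ofNat, ← ENNReal.ofReal_mul zero_le_two,
          ← ENNReal.ofReal_mul (by positivity)]
        congr 1
        field_simp

theorem stmt10 (d : ℕ) (hd : 1 ≤ d) (c R : ℝ) (hc : 0 < c) (hR : 0 < R) :
    ∃ N : ℕ, ∀ θ : Fin d → ℝ,
      ∃ Γ : Fin N → Set (EuclideanSpace ℝ (Fin (d + 1))),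
        (⋃ j, Γ j) = tildeGamma d θ ∧
        2 * ∑ j, ENNReal.ofReal c / setGap (Γ j) ≤ ENNReal.ofReal R :=
  stmt10_general d c R hc hR
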